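/- arXiv:math/0508178 — 3 statements merged into one kernel-verified Lean document; each statement's English description precedes it below -/
import Mathlib

section
/- For every real τ, adj(I + τL) = Q(τ) := Σ_{k=0}^{n−d} Q_k τ^k and det(I + τL) = σ(τ) := Σ_{k=0}^{n−d} σ_k τ^k, where Q_k are the in-forest matrices and σ_k the in-forest weights of Γ. -/
/-!
Row `i` of `1 + τ • lap W` is `e_i + ∑ j, τ W i j (e_i - e_j)`, so multilinearity expands
`det (1 + τ • lap W)` over the partial maps `f` that give each vertex at most one out-arc
`i → f i`; the term of `f` is `∏ τ W i (f i)` times `det (1 - N_f)`, with `N_f` the 0/1 matrix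
of `f`. If `f` has a cycle, the rows of `1 - N_f` on the cycle vertices sum to zero. Otherwise
`1 - N_f` is triangular for the order by number of descendants, so its determinant is `1`, and
its inverse, hence its adjugate, is the reachability matrix of `f`. Acyclic partial maps are the
in-forests, arcs of weight zero contribute nothing, and `i` reaches the root `j` exactly when `i`
lies in the tree rooted at `j`. For the adjugate, `adj M i j` is `det M` with row `j` replaced
by `e_i`, which kills every term in which `j` has an out-arc.
-/

open Matrix Finset Polynomial

/-- `A` is (the arc set of) an in-forest of the weighted digraph with arc-weight
matrix `W`: all arcs are loopless arcs of positive weight, every vertex has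
outdegree at most one, and there are no directed cycles. -/
def IsInForest {n : ℕ} (W : Matrix (Fin n) (Fin n) ℝ)
    (A : Finset (Fin n × Fin n)) : Prop :=
  (∀ e ∈ A, e.1 ≠ e.2 ∧ 0 < W e.1 e.2) ∧
  (∀ i : Fin n, (A.filter (fun e => e.1 = i)).card ≤ 1) ∧
  (∀ i : Fin n, ¬ Relation.TransGen (fun a b => (a, b) ∈ A) i i)

/-- The weight of a forest: the product of its arc weights. -/
def forestWeight {n : ℕ} (W : Matrix (Fin n) (Fin n) ℝ)
    (A : Finset (Fin n × Fin n)) : ℝ :=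
  ∏ e ∈ A, W e.1 e.2

/-- `i` belongs to the tree of the forest `A` converging to (rooted at) `j`. -/
def InTreeRootedAt {n : ℕ} (A : Finset (Fin n × Fin n)) (i j : Fin n) : Prop :=
  Relation.ReflTransGen (fun a b => (a, b) ∈ A) i j ∧ ∀ e ∈ A, e.1 ≠ j

open scoped Classical in
/-- `σ_k`: the total weight of in-forests with `k` arcs. -/
noncomputable def sigmaW {n : ℕ} (W : Matrix (Fin n) (Fin n) ℝ) (k : ℕ) : ℝ :=
  ∑ A ∈ Finset.univ.powerset.filter
      (fun A => IsInForest W A ∧ A.card = k), forestWeight W A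

open scoped Classical in
/-- `Q_k`: the matrix of in-forests with `k` arcs; its `(i,j)` entry is the total
weight of in-forests with `k` arcs in which `i` belongs to a tree rooted at `j`. -/
noncomputable def forestMatrix {n : ℕ} (W : Matrix (Fin n) (Fin n) ℝ) (k : ℕ) :
    Matrix (Fin n) (Fin n) ℝ :=
  Matrix.of fun i j =>
    ∑ A ∈ Finset.univ.powerset.filter
        (fun A => IsInForest W A ∧ A.card = k ∧ InTreeRootedAt A i j),
      forestWeight W A

open scoped Classical in
/-- `σ`: the total weight of all in-forests. -/
noncomputable def sigmaTot {n : ℕ} (W : Matrix (Fin n) (Fin n) ℝ) : ℝ :=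
  ∑ A ∈ Finset.univ.powerset.filter (fun A => IsInForest W A), forestWeight W A

open scoped Classical in
/-- `Q`: the matrix of all in-forests. -/
noncomputable def forestMatrixTot {n : ℕ} (W : Matrix (Fin n) (Fin n) ℝ) :
    Matrix (Fin n) (Fin n) ℝ :=
  Matrix.of fun i j =>
    ∑ A ∈ Finset.univ.powerset.filter
        (fun A => IsInForest W A ∧ InTreeRootedAt A i j), forestWeight W A

open scoped Classical in
/-- The number of arcs in a maximum in-forest (equal to `n - d` where `d` is the
in-forest dimension). -/
noncomputable def maxForestCard {n : ℕ} (W : Matrix (Fin n) (Fin n) ℝ) : ℕ :=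
  (Finset.univ.powerset.filter (fun A => IsInForest W A)).sup Finset.card

/-- The in-forest dimension `d` of the digraph. -/
noncomputable def forestDim {n : ℕ} (W : Matrix (Fin n) (Fin n) ℝ) : ℕ :=
  n - maxForestCard W

/-- The (row) Laplacian matrix of the weighted digraph with arc-weight matrix `W`. -/
def lap {n : ℕ} (W : Matrix (Fin n) (Fin n) ℝ) : Matrix (Fin n) (Fin n) ℝ :=
  Matrix.diagonal (fun i => ∑ j, W i j) - W

/-- `J̃`: the normalized matrix of maximum in-forests. -/
noncomputable def Jtilde {n : ℕ} (W : Matrix (Fin n) (Fin n) ℝ) :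
    Matrix (Fin n) (Fin n) ℝ :=
  (sigmaW W (maxForestCard W))⁻¹ • forestMatrix W (maxForestCard W)

namespace MatrixForest

section ArcMatrix

variable {ι : Type*}

def arcRel (f : ι → Option ι) (a b : ι) : Prop := f a = some b

def IsAcyclic (f : ι → Option ι) : Prop := ∀ i, ¬ Relation.TransGen (arcRel f) i i

noncomputable def height (f : ι → Option ι) (i : ι) : ℕ :=
  {j | Relation.TransGen (arcRel f) i j}.ncard

lemma height_lt_of_arc [Finite ι] {f : ι → Option ι} (hf : IsAcyclic f) {i b : ι}
    (hb : f i = some b) : height f b < height f i :=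
  Set.ncard_lt_ncard ⟨fun _ hj => Relation.TransGen.head hb hj,
    fun hsub => hf b (hsub (Relation.TransGen.single hb))⟩

def arcMatrix {R : Type*} [Zero R] [One R] [DecidableEq ι] (f : ι → Option ι) :
    Matrix ι ι R :=
  of fun i j => if f i = some j then 1 else 0

open scoped Classical in
noncomputable def reachMatrix {R : Type*} [Zero R] [One R] (f : ι → Option ι) :
    Matrix ι ι R :=
  of fun i j => if Relation.ReflTransGen (arcRel f) i j then 1 else 0

variable [DecidableEq ι] {R : Type*} [CommRing R]

lemma one_sub_arcMatrix_row (f : ι → Option ι) (i : ι) :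
    (1 - arcMatrix f : Matrix ι ι R) i = Pi.single i 1 - (f i).elim 0 (Pi.single · 1) := by
  ext m
  cases hfi : f i <;> simp [arcMatrix, hfi, one_apply, Pi.single_apply, eq_comm]

lemma reachMatrix_apply_of_eq_none {f : ι → Option ι} {i : ι} (hi : f i = none) (j : ι) :
    reachMatrix f i j = (1 : Matrix ι ι R) i j := by
  have : Relation.ReflTransGen (arcRel f) i j ↔ i = j :=
    Relation.ReflTransGen.cases_head_iff.trans (by simp [arcRel, hi])
  simp [reachMatrix, one_apply, this]

open scoped Classical in
lemma reachMatrix_apply_of_eq_some {f : ι → Option ι} (hf : IsAcyclic f) {i b : ι}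
    (hb : f i = some b) (j : ι) :
    reachMatrix f i j = (1 : Matrix ι ι R) i j + reachMatrix f b j := by
  by_cases hij : i = j
  · subst hij
    have hbi : ¬ Relation.ReflTransGen (arcRel f) b i := fun hbi => hf i (.head' hb hbi)
    simp [reachMatrix, hbi, Relation.ReflTransGen.refl]
  · simp only [reachMatrix, of_apply, one_apply, if_neg hij, zero_add]
    exact if_congr (Relation.ReflTransGen.cases_head_iff.trans (by simp [arcRel, hb, hij])) rfl rfl

variable [Fintype ι]

lemma arcMatrix_mul_apply (f : ι → Option ι) (M : Matrix ι ι R) (i j : ι) :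
    (arcMatrix f * M : Matrix ι ι R) i j = (f i).elim 0 (M · j) := by
  cases hfi : f i <;> simp [arcMatrix, mul_apply, hfi]

lemma one_sub_arcMatrix_mul_reachMatrix {f : ι → Option ι} (hf : IsAcyclic f) :
    (1 - arcMatrix f) * reachMatrix f = (1 : Matrix ι ι R) := by
  ext i j
  rw [sub_mul, one_mul, Matrix.sub_apply, arcMatrix_mul_apply, sub_eq_iff_eq_add]
  cases hfi : f i with
  | none => simp [reachMatrix_apply_of_eq_none hfi]
  | some b => simp [reachMatrix_apply_of_eq_some hf hfi, add_comm]

lemma blockTriangular_one_sub_arcMatrix {f : ι → Option ι} (hf : IsAcyclic f) :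
    (1 - arcMatrix f : Matrix ι ι R).BlockTriangular (OrderDual.toDual ∘ height f) := by
  intro i j hji
  have hij : i ≠ j := fun h => (h ▸ hji).false
  have hfi : f i ≠ some j := fun h => (height_lt_of_arc hf h).not_gt hji
  simp [arcMatrix, hij, hfi]

lemma det_one_sub_arcMatrix {f : ι → Option ι} (hf : IsAcyclic f) :
    (1 - arcMatrix f : Matrix ι ι R).det = 1 := by
  rw [(blockTriangular_one_sub_arcMatrix hf).det]
  refine Finset.prod_eq_one fun a _ => ?_
  suffices (1 - arcMatrix f : Matrix ι ι R).toSquareBlock _ a = 1 by rw [this, det_one]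
  ext ⟨i, hi⟩ ⟨j, hj⟩
  have hfi : f i ≠ some j := fun h =>
    (height_lt_of_arc hf h).ne (OrderDual.toDual.injective (hj.trans hi.symm))
  by_cases hij : i = j
  · subst hij; simp [toSquareBlock_def, arcMatrix, hfi]
  · simp [toSquareBlock_def, arcMatrix, hij, hfi]

lemma adjugate_one_sub_arcMatrix {f : ι → Option ι} (hf : IsAcyclic f) :
    (1 - arcMatrix f : Matrix ι ι R).adjugate = reachMatrix f := by
  calc (1 - arcMatrix f : Matrix ι ι R).adjugate
      = (1 - arcMatrix f : Matrix ι ι R).adjugate * ((1 - arcMatrix f) * reachMatrix f) := by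
        rw [one_sub_arcMatrix_mul_reachMatrix hf, mul_one]
    _ = reachMatrix f := by
        rw [← mul_assoc, adjugate_mul, det_one_sub_arcMatrix hf, one_smul, one_mul]

lemma det_eq_zero_of_sum_rows_eq_zero {M : Matrix ι ι R} {S : Finset ι} (hS : S.Nonempty)
    (h : ∑ x ∈ S, M x = 0) : M.det = 0 := by
  obtain ⟨x₀, hx₀⟩ := hS
  have hsum : ∑ k, (if k ∈ S then (1 : R) else 0) • M k = ∑ x ∈ S, M x := by
    rw [← Finset.sum_subset (Finset.subset_univ S) fun x _ hx => by simp [hx]]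
    exact Finset.sum_congr rfl fun x hx => by simp [hx]
  have := det_updateRow_sum M x₀ (fun k => if k ∈ S then 1 else 0)
  rw [hsum, h, if_pos hx₀, one_smul] at this
  rw [← this, det_eq_zero_of_row_eq_zero x₀ (fun j => by simp)]

/-- The rows of `1 - arcMatrix f` indexed by the vertices on cycles sum to zero, since the
successor map permutes those vertices. -/
lemma det_eq_zero_of_not_isAcyclic {f : ι → Option ι} (hf : ¬ IsAcyclic f) {M : Matrix ι ι R}
    (hM : ∀ x, Relation.TransGen (arcRel f) x x → M x = (1 - arcMatrix f : Matrix ι ι R) x) :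
    M.det = 0 := by
  classical
  set S := Finset.univ.filter fun x => Relation.TransGen (arcRel f) x x with hS
  have hmem : ∀ x, x ∈ S ↔ Relation.TransGen (arcRel f) x x := by simp [hS]
  obtain ⟨x₀, hx₀⟩ := not_forall_not.mp hf
  set g : ι → ι := fun x => (f x).getD x
  have hg : ∀ x ∈ S, f x = some (g x) ∧ g x ∈ S := by
    intro x hx
    obtain ⟨y, hxy, hyx⟩ := Relation.TransGen.head'_iff.mp ((hmem x).mp hx)
    have hgx : g x = y := by simp [g, show f x = some y from hxy]
    exact ⟨hgx ▸ hxy, hgx ▸ (hmem y).mpr (Relation.TransGen.tail' hyx hxy)⟩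
  have hsurj : Set.SurjOn g S S := by
    intro y hy
    obtain ⟨x, hyx, hxy⟩ := Relation.TransGen.tail'_iff.mp ((hmem y).mp hy)
    exact ⟨x, (hmem x).mpr (Relation.TransGen.head' hxy hyx),
      by simp [g, show f x = some y from hxy]⟩
  have hinj : Set.InjOn g S :=
    Finset.injOn_of_surjOn_of_card_le g (fun x hx => (hg x hx).2) hsurj le_rfl
  have hrows : ∀ x ∈ S, M x = Pi.single x 1 - Pi.single (g x) 1 := fun x hx => by
    rw [hM x ((hmem x).mp hx), one_sub_arcMatrix_row, (hg x hx).1, Option.elim_some]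
  refine det_eq_zero_of_sum_rows_eq_zero ⟨x₀, (hmem x₀).mpr hx₀⟩ ?_
  rw [Finset.sum_congr rfl hrows, Finset.sum_sub_distrib, sub_eq_zero]
  exact (Finset.sum_nbij g (fun x hx => (hg x hx).2) hinj hsurj fun _ _ => rfl).symm

lemma det_one_sub_arcMatrix_of_not_isAcyclic {f : ι → Option ι} (hf : ¬ IsAcyclic f) :
    (1 - arcMatrix f : Matrix ι ι R).det = 0 :=
  det_eq_zero_of_not_isAcyclic hf fun _ _ => rfl

lemma adjugate_one_sub_arcMatrix_apply_of_not_isAcyclic {f : ι → Option ι} (hf : ¬ IsAcyclic f)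
    (i : ι) {j : ι} (hj : f j = none) : (1 - arcMatrix f : Matrix ι ι R).adjugate i j = 0 := by
  rw [adjugate_apply]
  refine det_eq_zero_of_not_isAcyclic hf fun x hx => updateRow_ne fun hxj => ?_
  obtain ⟨y, hxy, -⟩ := Relation.TransGen.head'_iff.mp hx
  exact Option.some_ne_none y ((hxy : f x = some y).symm.trans (hxj ▸ hj))

end ArcMatrix

lemma det_of_row_sums {ι R : Type*} [Fintype ι] [DecidableEq ι] [CommRing R] {κ : ι → Type*}
    [∀ i, Fintype (κ i)] (r : ∀ i, κ i → ι → R) :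
    (of fun i => ∑ k, r i k).det = ∑ g : ∀ i, κ i, (of fun i => r i (g i)).det :=
  (detRowAlternating : (ι → R) [⋀^ι]→ₗ[R] R).toMultilinearMap.map_sum r

section Laplacian

variable {n : ℕ}

/-- The coefficient of the term indexed by `f` in the multilinear expansion of
`det (1 + τ • lap W)`. -/
def scaledWeight (τ : ℝ) (W : Matrix (Fin n) (Fin n) ℝ) (f : Fin n → Option (Fin n)) : ℝ :=
  ∏ i, (f i).elim 1 (τ * W i ·)

lemma one_add_smul_lap_row (τ : ℝ) (W : Matrix (Fin n) (Fin n) ℝ) (i : Fin n) :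
    (1 + τ • lap W) i = ∑ o : Option (Fin n),
      o.elim 1 (τ * W i ·) • (Pi.single i 1 - o.elim 0 (Pi.single · 1)) := by
  ext m
  by_cases him : m = i
  · subst him
    simp [lap, Fintype.sum_option, Finset.sum_apply, Pi.single_apply, mul_sub, Finset.mul_sum,
      add_sub_assoc]
  · simp [lap, Fintype.sum_option, Finset.sum_apply, Pi.single_apply, him, Ne.symm him,
      one_apply]

lemma det_one_add_smul_lap_eq_sum (τ : ℝ) (W : Matrix (Fin n) (Fin n) ℝ) :
    (1 + τ • lap W).det =
      ∑ f : Fin n → Option (Fin n),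
        scaledWeight τ W f * (1 - arcMatrix f : Matrix (Fin n) (Fin n) ℝ).det := by
  have hrows : 1 + τ • lap W = of fun i => ∑ o : Option (Fin n),
      o.elim 1 (τ * W i ·) • (Pi.single i 1 - o.elim 0 (Pi.single · 1) : Fin n → ℝ) :=
    funext (one_add_smul_lap_row τ W)
  rw [hrows, det_of_row_sums]
  refine Finset.sum_congr rfl fun f _ => ?_
  rw [scaledWeight, ← det_mul_column]
  congr 1
  ext i m
  rw [of_apply, of_apply, one_sub_arcMatrix_row]
  rfl

lemma adjugate_one_add_smul_lap_apply_eq_sum (τ : ℝ) (W : Matrix (Fin n) (Fin n) ℝ)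
    (i j : Fin n) :
    (1 + τ • lap W).adjugate i j = ∑ f : Fin n → Option (Fin n),
      if f j = none then
        scaledWeight τ W f * (1 - arcMatrix f : Matrix (Fin n) (Fin n) ℝ).adjugate i j
      else 0 := by
  set r : Fin n → Option (Fin n) → Fin n → ℝ := fun k o =>
    o.elim 1 (τ * W k ·) • (Pi.single k 1 - o.elim 0 (Pi.single · 1))
  set r' := Function.update r j fun o => o.elim (Pi.single i 1) fun _ => 0
  have hrows : (1 + τ • lap W).updateRow j (Pi.single i 1) = of fun k => ∑ o, r' k o := by
    ext k m
    by_cases hkj : k = j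
    · subst hkj
      simp [r', Fintype.sum_option]
    · rw [updateRow_ne hkj, one_add_smul_lap_row]
      simp only [of_apply, r', Function.update_of_ne hkj, r]
  rw [adjugate_apply, hrows, det_of_row_sums]
  refine Finset.sum_congr rfl fun f _ => ?_
  cases hfj : f j with
  | some b =>
    rw [if_neg (Option.some_ne_none b)]
    exact det_eq_zero_of_row_eq_zero j fun m => by simp [r', hfj]
  | none =>
    rw [if_pos rfl, adjugate_apply, scaledWeight, ← det_mul_column]
    congr 1
    ext k m
    by_cases hkj : k = j
    · subst hkj
      simp [r', hfj]
    · simp only [of_apply, r', Function.update_of_ne hkj, updateRow_ne hkj,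
        one_sub_arcMatrix_row]
      rfl

end Laplacian

section ArcSet

variable {ι : Type*} [Fintype ι] [DecidableEq ι]

def arcSet (f : ι → Option ι) : Finset (ι × ι) :=
  Finset.univ.filter fun e => f e.1 = some e.2

lemma mem_arcSet {f : ι → Option ι} {e : ι × ι} : e ∈ arcSet f ↔ f e.1 = some e.2 := by
  simp [arcSet]

lemma arcSet_rel_eq_arcRel (f : ι → Option ι) :
    (fun a b => (a, b) ∈ arcSet f) = arcRel f := by
  funext a b
  exact propext mem_arcSet

lemma arcSet_injective : Function.Injective (arcSet (ι := ι)) := by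
  intro f g h
  funext i
  refine Option.ext fun b => ?_
  exact (mem_arcSet (e := (i, b))).symm.trans (by rw [h]; exact mem_arcSet)

lemma prod_arcSet {M : Type*} [CommMonoid M] (f : ι → Option ι) (h : ι × ι → M) :
    ∏ e ∈ arcSet f, h e = ∏ i, (f i).elim 1 fun j => h (i, j) := by
  rw [arcSet, Finset.prod_filter, Fintype.prod_prod_type]
  refine Finset.prod_congr rfl fun i _ => ?_
  cases hfi : f i <;> simp [hfi]

open scoped Classical in
noncomputable def ofArcSet (A : Finset (ι × ι)) : ι → Option ι :=
  fun i => if h : ∃ j, (i, j) ∈ A then some h.choose else none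

lemma arcSet_ofArcSet {A : Finset (ι × ι)} (hA : ∀ i, (A.filter fun e => e.1 = i).card ≤ 1) :
    arcSet (ofArcSet A) = A := by
  ext ⟨a, b⟩
  simp only [mem_arcSet, ofArcSet]
  split_ifs with h
  · rw [Option.some_inj]
    refine ⟨fun hb => hb ▸ h.choose_spec, fun hab => ?_⟩
    exact congrArg Prod.snd (Finset.card_le_one.mp (hA a) _
      (Finset.mem_filter.mpr ⟨h.choose_spec, rfl⟩) _ (Finset.mem_filter.mpr ⟨hab, rfl⟩))
  · simpa using fun hab => h ⟨b, hab⟩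

end ArcSet

section Forests

variable {n : ℕ} {W : Matrix (Fin n) (Fin n) ℝ}

lemma scaledWeight_eq (τ : ℝ) (f : Fin n → Option (Fin n)) :
    scaledWeight τ W f = τ ^ (arcSet f).card * forestWeight W (arcSet f) := by
  rw [forestWeight, ← Finset.prod_const, ← Finset.prod_mul_distrib, prod_arcSet, scaledWeight]

lemma isAcyclic_of_isInForest {f : Fin n → Option (Fin n)} (hF : IsInForest W (arcSet f)) :
    IsAcyclic f := by
  rw [IsAcyclic, ← arcSet_rel_eq_arcRel]
  exact hF.2.2

lemma isInForest_arcSet (hW : ∀ i j, 0 ≤ W i j) {f : Fin n → Option (Fin n)}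
    (hf : IsAcyclic f) (hw : forestWeight W (arcSet f) ≠ 0) : IsInForest W (arcSet f) := by
  refine ⟨fun e he => ⟨fun hloop => ?_, ?_⟩, fun i => ?_, ?_⟩
  · exact hf e.1 (Relation.TransGen.single (hloop ▸ mem_arcSet.mp he))
  · exact (hW _ _).lt_of_ne' (Finset.prod_ne_zero_iff.mp hw e he)
  · refine Finset.card_le_one.mpr fun a ha b hb => ?_
    simp only [Finset.mem_filter, mem_arcSet] at ha hb
    obtain ⟨ha, rfl⟩ := ha
    obtain ⟨hb, hab⟩ := hb
    exact Prod.ext hab.symm (Option.some_inj.mp (ha.symm.trans (hab ▸ hb)))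
  · rw [arcSet_rel_eq_arcRel]
    exact hf

lemma inTreeRootedAt_arcSet_iff (f : Fin n → Option (Fin n)) (i j : Fin n) :
    InTreeRootedAt (arcSet f) i j ↔ Relation.ReflTransGen (arcRel f) i j ∧ f j = none := by
  rw [InTreeRootedAt, arcSet_rel_eq_arcRel, Option.eq_none_iff_forall_ne_some]
  refine and_congr_right' ⟨fun h b hb => h (j, b) (mem_arcSet.mpr hb) rfl, ?_⟩
  rintro h e he rfl
  exact h e.2 (mem_arcSet.mp he)

open scoped Classical in
lemma sum_acyclic_eq_sum_forests (hW : ∀ i j, 0 ≤ W i j) (τ : ℝ)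
    (P : Finset (Fin n × Fin n) → Prop) :
    ∑ f : Fin n → Option (Fin n),
        (if IsAcyclic f ∧ P (arcSet f) then scaledWeight τ W f else 0) =
      ∑ A ∈ Finset.univ.powerset.filter (fun A => IsInForest W A ∧ P A),
        τ ^ A.card * forestWeight W A := by
  refine Finset.sum_bij_ne_zero (fun f _ _ => arcSet f) (fun f _ hf => ?_)
    (fun f _ _ g _ _ h => arcSet_injective h) (fun A hA hA0 => ?_) (fun f _ hf => ?_)
  · obtain ⟨hcond, hw⟩ := ite_ne_right_iff.mp hf
    rw [scaledWeight_eq] at hw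
    exact Finset.mem_filter.mpr ⟨Finset.mem_powerset.mpr (Finset.subset_univ _),
      isInForest_arcSet hW hcond.1 (right_ne_zero_of_mul hw), hcond.2⟩
  · obtain ⟨hF, hP⟩ := (Finset.mem_filter.mp hA).2
    have hA' := arcSet_ofArcSet hF.2.1
    refine ⟨ofArcSet A, Finset.mem_univ _, ?_, hA'⟩
    rw [if_pos ⟨isAcyclic_of_isInForest (by rwa [hA']), by rwa [hA']⟩, scaledWeight_eq, hA']
    exact hA0
  · rw [if_pos (ite_ne_right_iff.mp hf).1, scaledWeight_eq]

open scoped Classical in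
lemma sum_forests_eq_sum_range_card (τ : ℝ) (P : Finset (Fin n × Fin n) → Prop) :
    ∑ A ∈ Finset.univ.powerset.filter (fun A => IsInForest W A ∧ P A),
        τ ^ A.card * forestWeight W A =
      ∑ k ∈ Finset.range (maxForestCard W + 1),
        (∑ A ∈ Finset.univ.powerset.filter (fun A => IsInForest W A ∧ A.card = k ∧ P A),
          forestWeight W A) * τ ^ k := by
  have hcard : ∀ A ∈ Finset.univ.powerset.filter (fun A => IsInForest W A ∧ P A),
      A.card ∈ Finset.range (maxForestCard W + 1) := fun A hA => by
    rw [Finset.mem_range, Nat.lt_succ_iff]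
    exact Finset.le_sup (f := Finset.card) (Finset.mem_filter.mpr
      ⟨(Finset.mem_filter.mp hA).1, (Finset.mem_filter.mp hA).2.1⟩)
  rw [← Finset.sum_fiberwise_of_maps_to hcard]
  refine Finset.sum_congr rfl fun k _ => ?_
  rw [Finset.filter_filter, Finset.sum_mul]
  refine Finset.sum_congr (Finset.filter_congr fun A _ => ?_) fun A hA => ?_
  · tauto
  · rw [(Finset.mem_filter.mp hA).2.2.1, mul_comm]

open scoped Classical in
theorem det_one_add_smul_lap (hW : ∀ i j, 0 ≤ W i j) (τ : ℝ) :
    (1 + τ • lap W).det = ∑ k ∈ Finset.range (maxForestCard W + 1), sigmaW W k * τ ^ k := by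
  have h := (sum_acyclic_eq_sum_forests hW τ fun _ => True).trans
    (sum_forests_eq_sum_range_card τ fun _ => True)
  simp only [and_true] at h
  simp only [sigmaW]
  rw [det_one_add_smul_lap_eq_sum, ← h]
  refine Finset.sum_congr rfl fun f _ => ?_
  by_cases hf : IsAcyclic f
  · rw [det_one_sub_arcMatrix hf, mul_one, if_pos hf]
  · rw [det_one_sub_arcMatrix_of_not_isAcyclic hf, mul_zero, if_neg hf]

open scoped Classical in
theorem adjugate_one_add_smul_lap_apply (hW : ∀ i j, 0 ≤ W i j) (τ : ℝ) (i j : Fin n) :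
    (1 + τ • lap W).adjugate i j =
      ∑ k ∈ Finset.range (maxForestCard W + 1), forestMatrix W k i j * τ ^ k := by
  simp only [forestMatrix, of_apply]
  rw [adjugate_one_add_smul_lap_apply_eq_sum, ← sum_forests_eq_sum_range_card,
    ← sum_acyclic_eq_sum_forests hW]
  refine Finset.sum_congr rfl fun f _ => ?_
  rw [inTreeRootedAt_arcSet_iff]
  by_cases hj : f j = none
  · by_cases hf : IsAcyclic f
    · rw [adjugate_one_sub_arcMatrix hf, reachMatrix, of_apply]
      by_cases hij : Relation.ReflTransGen (arcRel f) i j <;> simp [hj, hf, hij]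
    · rw [adjugate_one_sub_arcMatrix_apply_of_not_isAcyclic hf i hj]
      simp [hf]
  · simp [hj]

end Forests

end MatrixForest

theorem parametric_matrix_forest_theorem_general {n : ℕ} (W : Matrix (Fin n) (Fin n) ℝ)
    (hW : ∀ i j, 0 ≤ W i j) :
    ∀ τ : ℝ,
      (1 + τ • lap W).adjugate =
        ∑ k ∈ Finset.range (maxForestCard W + 1), τ ^ k • forestMatrix W k ∧
      (1 + τ • lap W).det =
        ∑ k ∈ Finset.range (maxForestCard W + 1), sigmaW W k * τ ^ k := by
  intro τ
  refine ⟨?_, MatrixForest.det_one_add_smul_lap hW τ⟩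
  ext i j
  rw [MatrixForest.adjugate_one_add_smul_lap_apply hW, Matrix.sum_apply]
  exact Finset.sum_congr rfl fun k _ => mul_comm _ _

/-- Parametric matrix-forest theorem: for every real `τ`,
`adj(I + τL) = Σ_{k=0}^{n-d} Q_k τ^k` and `det(I + τL) = Σ_{k=0}^{n-d} σ_k τ^k`. -/
theorem parametric_matrix_forest_theorem {n : ℕ} (W : Matrix (Fin n) (Fin n) ℝ)
    (hn : 1 < n) (hW : ∀ i j, 0 ≤ W i j) (hdiag : ∀ i, W i i = 0) :
    ∀ τ : ℝ,
      (1 + τ • lap W).adjugate =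
        ∑ k ∈ Finset.range (maxForestCard W + 1), τ ^ k • forestMatrix W k ∧
      (1 + τ • lap W).det =
        ∑ k ∈ Finset.range (maxForestCard W + 1), sigmaW W k * τ ^ k :=
  parametric_matrix_forest_theorem_general W hW
end

section
/- The multiplicity of 0 as an eigenvalue (root of the characteristic polynomial) of the Laplacian matrix L of a weighted digraph Γ equals the in-forest dimension d of Γ, the minimum number of trees in a spanning converging forest. -/
open Matrix Finset Polynomial

/-! Expanding `det (X • 1 - L)` multilinearly along the rows, each row contributes either `X` or
one out-arc of its vertex, so the characteristic polynomial is a sum over partial successor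
functions `c`, weighted by `det (1 - P_c)` for the 0/1 matrix `P_c` of `c`. This determinant is `1`
when `c` has no cycle and `0` otherwise, and the acyclic `c` of positive weight are exactly the
in-forests, hence `coeff_{n-k} = (-1)^k σ_k`. As `σ_k > 0` for `k = n - d` and `σ_k = 0` for
`k > n - d`, the lowest nonzero coefficient of the characteristic polynomial is that of `X^d`. -/

open Relation

variable {ι : Type*}

def succRel (c : ι → Option ι) (a b : ι) : Prop := c a = some b

theorem Relation.ncard_reflTransGen_lt [Finite ι] {r : ι → ι → Prop}
    (hr : ∀ a, ¬ TransGen r a a) {a b : ι} (hab : r a b) :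
    {x | ReflTransGen r b x}.ncard < {x | ReflTransGen r a x}.ncard := by
  refine Set.ncard_lt_ncard ⟨fun x hx => ReflTransGen.head hab hx, fun hsub => ?_⟩
  exact hr a (TransGen.head' hab (hsub ReflTransGen.refl))

theorem bijOn_getD_of_transGen_succRel [Finite ι] (c : ι → Option ι) :
    Set.BijOn (fun i => (c i).getD i) {i | TransGen (succRel c) i i}
      {i | TransGen (succRel c) i i} := by
  have hsucc : ∀ {i j}, succRel c i j → (c i).getD i = j := fun h => by
    simp [show c _ = some _ from h]
  have hmaps : Set.MapsTo (fun i => (c i).getD i) {i | TransGen (succRel c) i i}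
      {i | TransGen (succRel c) i i} := by
    intro i hi
    obtain ⟨j, hij, hji⟩ := TransGen.head'_iff.mp hi
    show TransGen (succRel c) ((c i).getD i) ((c i).getD i)
    rw [hsucc hij]
    exact TransGen.tail' hji hij
  refine (Set.toFinite _).surjOn_iff_bijOn_of_mapsTo hmaps |>.mp fun j hj => ?_
  obtain ⟨i, hji, hij⟩ := TransGen.tail'_iff.mp hj
  exact ⟨i, TransGen.head' hij hji, hsucc hij⟩

namespace Matrix

variable {R : Type*} [CommRing R] [DecidableEq ι]

def ofPartialFun (c : ι → Option ι) : Matrix ι ι R :=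
  of fun i j => if c i = some j then 1 else 0

variable (c : ι → Option ι)

theorem one_sub_ofPartialFun_row {i j : ι} (h : succRel c i j) :
    (1 - ofPartialFun c : Matrix ι ι R) i = Pi.single i 1 - Pi.single j 1 := by
  ext k
  simp [ofPartialFun, one_apply, Pi.single_apply, eq_comm, show c i = some j from h]

variable [Fintype ι]

theorem det_eq_sum_prod_mul_det_of_row_eq_sum {κ : Type*} [Fintype κ] (M : Matrix ι ι R)
    (s : ι → κ → R) (v : ι → κ → ι → R) (hM : ∀ i, M i = ∑ k, s i k • v i k) :
    M.det = ∑ c : ι → κ, (∏ i, s i (c i)) * (of fun i => v i (c i)).det := by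
  let det' := (detRowAlternating : (ι → R) [⋀^ι]→ₗ[R] R).toMultilinearMap
  calc M.det = det' fun i => ∑ k, s i k • v i k := congrArg det' (funext hM)
    _ = ∑ c : ι → κ, (∏ i, s i (c i)) * det' fun i => v i (c i) := by
      simp_rw [MultilinearMap.map_sum, MultilinearMap.map_smul_univ, smul_eq_mul]

-- Ordering the vertices by the number of vertices reachable from them makes `1 - ofPartialFun c`
-- block triangular with identity blocks.
theorem det_one_sub_ofPartialFun_of_acyclic (hc : ∀ i, ¬ TransGen (succRel c) i i) :
    (1 - ofPartialFun c : Matrix ι ι R).det = 1 := by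
  set height : ι → ℕ := fun i => {x | ReflTransGen (succRel c) i x}.ncard
  have hdesc : ∀ i j, succRel c i j → height j < height i :=
    fun i j hij => ncard_reflTransGen_lt hc hij
  have hbt : (1 - ofPartialFun c : Matrix ι ι R).BlockTriangular (OrderDual.toDual ∘ height) := by
    intro i j hlt
    have hne : i ≠ j := by rintro rfl; exact lt_irrefl _ hlt
    have hnot : c i ≠ some j := fun h => (hdesc i j h).not_gt hlt
    simp [ofPartialFun, hne, hnot]
  rw [hbt.det]
  refine prod_eq_one fun a _ => ?_
  suffices (1 - ofPartialFun c : Matrix ι ι R).toSquareBlock (OrderDual.toDual ∘ height) a = 1 by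
    rw [this, det_one]
  ext ⟨i, hi⟩ ⟨j, hj⟩
  have hnot : c i ≠ some j := fun h =>
    (hdesc i j h).ne (congrArg OrderDual.ofDual (hj.trans hi.symm))
  simp [toSquareBlock_def, ofPartialFun, one_apply, hnot]

-- `c` permutes the vertices lying on cycles, so the rows indexed by them sum to zero.
theorem det_one_sub_ofPartialFun_of_cycle {i₀ : ι} (h : TransGen (succRel c) i₀ i₀) :
    (1 - ofPartialFun c : Matrix ι ι R).det = 0 := by
  obtain ⟨S, hS⟩ : ∃ S : Finset ι, ∀ i, i ∈ S ↔ TransGen (succRel c) i i :=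
    ⟨(Set.toFinite {i | TransGen (succRel c) i i}).toFinset,
      fun _ => Set.Finite.mem_toFinset _⟩
  have hbij : Set.BijOn (fun i => (c i).getD i) S S := by
    convert bijOn_getD_of_transGen_succRel c <;> ext <;> exact hS _
  have hrows : ∑ i ∈ S, (1 - ofPartialFun c : Matrix ι ι R) i = 0 := by
    have hrow : ∀ i ∈ S, (1 - ofPartialFun c : Matrix ι ι R) i =
        Pi.single i 1 - Pi.single ((c i).getD i) 1 := fun i hi => by
      obtain ⟨j, hij, -⟩ := TransGen.head'_iff.mp ((hS i).mp hi)
      rw [one_sub_ofPartialFun_row c hij, show c i = some j from hij, Option.getD_some]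
    rw [sum_congr rfl hrow, sum_sub_distrib, sub_eq_zero]
    exact (sum_nbij _ hbij.mapsTo hbij.injOn hbij.surjOn fun _ _ => rfl).symm
  have hcomb :
      ∑ k, (if k ∈ S then (1 : R) else 0) • (1 - ofPartialFun c : Matrix ι ι R) k = 0 := by
    simp only [ite_smul, one_smul, zero_smul]
    exact (Fintype.sum_ite_mem S fun k => (1 - ofPartialFun c : Matrix ι ι R) k).trans hrows
  have hupdate := det_updateRow_sum (1 - ofPartialFun c : Matrix ι ι R) i₀
    fun k => if k ∈ S then 1 else 0
  rw [hcomb, if_pos ((hS i₀).mpr h), one_smul] at hupdate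
  rw [← hupdate]
  exact det_eq_zero_of_row_eq_zero i₀ fun j => by simp

end Matrix

section ArcSet

variable [Fintype ι] [DecidableEq ι]

def arcSet (c : ι → Option ι) : Finset (ι × ι) :=
  univ.filter fun e => c e.1 = some e.2

@[simp]
theorem mem_arcSet {c : ι → Option ι} {a b : ι} : (a, b) ∈ arcSet c ↔ succRel c a b := by
  simp [arcSet, succRel]

theorem arcSet_injective : Function.Injective (arcSet : (ι → Option ι) → Finset (ι × ι)) :=
  fun c c' h => funext fun i => Option.ext fun b => by
    show succRel c i b ↔ succRel c' i b
    rw [← mem_arcSet, ← mem_arcSet, h]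

theorem exists_arcSet_eq {A : Finset (ι × ι)} (hA : ∀ i, #(A.filter (·.1 = i)) ≤ 1) :
    ∃ c, arcSet c = A := by
  have hsucc : ∀ i, ∃ o : Option ι, ∀ b, o = some b ↔ (i, b) ∈ A := by
    intro i
    by_cases hi : ∃ b, (i, b) ∈ A
    · obtain ⟨b, hb⟩ := hi
      refine ⟨some b, fun b' => ⟨fun h => Option.some_injective _ h ▸ hb, fun hb' => ?_⟩⟩
      have := card_le_one.mp (hA i) _ (mem_filter.mpr ⟨hb, rfl⟩) _ (mem_filter.mpr ⟨hb', rfl⟩)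
      rw [Prod.mk.injEq] at this
      rw [this.2]
    · push Not at hi
      exact ⟨none, fun b => by simp [hi b]⟩
  choose c hc using hsucc
  exact ⟨c, by ext ⟨a, b⟩; exact mem_arcSet.trans (hc a b)⟩

theorem card_filter_fst_arcSet_le_one (c : ι → Option ι) (i : ι) :
    #((arcSet c).filter (·.1 = i)) ≤ 1 := by
  refine card_le_one.mpr fun ⟨a, b⟩ hab ⟨a', b'⟩ hab' => ?_
  simp only [mem_filter, mem_arcSet, succRel] at hab hab'
  obtain ⟨hab, rfl⟩ := hab
  obtain ⟨hab', rfl⟩ := hab'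
  rw [Option.some_injective _ (hab.symm.trans hab')]

theorem card_le_of_card_filter_fst_le_one {κ : Type*} {A : Finset (ι × κ)}
    (hA : ∀ i, #(A.filter (·.1 = i)) ≤ 1) : #A ≤ Fintype.card ι := by
  rw [card_eq_sum_card_fiberwise fun e _ => mem_coe.mpr (mem_univ e.1)]
  simpa using sum_le_sum fun i (_ : i ∈ univ) => hA i

@[to_additive]
theorem prod_arcSet {M : Type*} [CommMonoid M] (c : ι → Option ι) (g : ι × ι → M) :
    ∏ e ∈ arcSet c, g e = ∏ i, (c i).elim 1 fun b => g (i, b) := by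
  rw [arcSet, prod_filter, Fintype.prod_prod_type]
  refine prod_congr rfl fun i _ => ?_
  cases hci : c i <;> simp [hci]

end ArcSet

section Laplacian

variable {n : ℕ}

theorem isInForest_arcSet_iff {W : Matrix (Fin n) (Fin n) ℝ} {c : Fin n → Option (Fin n)} :
    IsInForest W (arcSet c) ↔
      (∀ i, ¬ TransGen (succRel c) i i) ∧ ∀ i j, succRel c i j → 0 < W i j := by
  simp only [IsInForest, card_filter_fst_arcSet_le_one, implies_true, true_and, Prod.forall,
    mem_arcSet]
  constructor
  · rintro ⟨harcs, hacyc⟩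
    exact ⟨hacyc, fun i j h => (harcs i j h).2⟩
  · rintro ⟨hacyc, hpos⟩
    exact ⟨fun i j h => ⟨fun hij => hacyc i (TransGen.single (hij ▸ h)), hpos i j h⟩, hacyc⟩

-- Row `i` of `X • 1 - lap W` is `X • eᵢ - ∑ⱼ W i j • (eᵢ - eⱼ)`: `none` picks the first term,
-- `some j` the arc `i → j`.
noncomputable def lapCoeff (W : Matrix (Fin n) (Fin n) ℝ) (i : Fin n) (o : Option (Fin n)) :
    ℝ[X] :=
  o.elim X fun j => -C (W i j)

theorem charmatrix_lap_row (W : Matrix (Fin n) (Fin n) ℝ) (i : Fin n) :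
    charmatrix (lap W) i = ∑ o, lapCoeff W i o •
      fun j => C ((1 : Matrix (Fin n) (Fin n) ℝ) i j - if o = some j then 1 else 0) := by
  ext j : 1
  by_cases hij : i = j
  · subst hij
    simp only [lap, charmatrix_apply_eq, Matrix.sub_apply, diagonal_apply_eq, map_sub, map_sum,
      lapCoeff, one_apply, MonoidWithZeroHom.map_ite_one_zero, Finset.sum_apply, Pi.smul_apply,
      ↓reduceIte, smul_eq_mul, mul_sub, mul_one, mul_ite, mul_zero, sum_sub_distrib,
      Fintype.sum_option, Option.elim_none, Option.elim_some, sum_neg_distrib, sum_ite_eq',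
      mem_univ, sub_neg_eq_add]
    ring
  · simp [lap, lapCoeff, one_apply, hij]

theorem charpoly_lap_eq_sum (W : Matrix (Fin n) (Fin n) ℝ) :
    (lap W).charpoly = ∑ c : Fin n → Option (Fin n),
      (∏ i, lapCoeff W i (c i)) * C (1 - ofPartialFun c : Matrix (Fin n) (Fin n) ℝ).det := by
  rw [charpoly, det_eq_sum_prod_mul_det_of_row_eq_sum _ _ _ (charmatrix_lap_row W)]
  refine sum_congr rfl fun c _ => congrArg _ ?_
  rw [RingHom.map_det]
  congr

theorem prod_lapCoeff (W : Matrix (Fin n) (Fin n) ℝ) (c : Fin n → Option (Fin n)) :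
    ∏ i, lapCoeff W i (c i) =
      (-1) ^ #(arcSet c) * C (forestWeight W (arcSet c)) * X ^ (n - #(arcSet c)) := by
  have hsplit : ∀ i, lapCoeff W i (c i) =
      X ^ ((c i).elim 1 fun _ => 0) * (c i).elim 1 fun j => -C (W i j) := fun i => by
    cases c i <;> simp [lapCoeff]
  have hcard : #(arcSet c) + ∑ i, (c i).elim 1 (fun _ => 0) = n := by
    have hone : ∀ i, ((c i).elim 0 fun _ => 1) + (c i).elim 1 (fun _ => 0) = 1 := fun i => by
      cases c i <;> rfl
    rw [card_eq_sum_ones, sum_arcSet, ← sum_add_distrib]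
    simp [hone]
  rw [prod_congr rfl fun i _ => hsplit i, prod_mul_distrib, prod_pow_eq_pow_sum,
    ← prod_arcSet c fun e => -C (W e.1 e.2), prod_neg, forestWeight, map_prod,
    show ∑ i, (c i).elim 1 (fun _ => 0) = n - #(arcSet c) by omega]
  ring

theorem prod_lapCoeff_mul_det_eq_zero {W : Matrix (Fin n) (Fin n) ℝ} (hW : ∀ i j, 0 ≤ W i j)
    {c : Fin n → Option (Fin n)} (hc : ¬ IsInForest W (arcSet c)) :
    (∏ i, lapCoeff W i (c i)) * C (1 - ofPartialFun c : Matrix (Fin n) (Fin n) ℝ).det = 0 := by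
  rw [isInForest_arcSet_iff, not_and_or] at hc
  push Not at hc
  rcases hc with ⟨i, hcycle⟩ | ⟨i, j, hij, hle⟩
  · rw [det_one_sub_ofPartialFun_of_cycle c hcycle, C_0, mul_zero]
  · have hzero : lapCoeff W i (c i) = 0 := by
      simp [lapCoeff, show c i = some j from hij, le_antisymm hle (hW i j)]
    rw [prod_eq_zero (mem_univ i) hzero, zero_mul]

open scoped Classical in
theorem charpoly_lap_eq_sum_isInForest (W : Matrix (Fin n) (Fin n) ℝ) (hW : ∀ i j, 0 ≤ W i j) :
    (lap W).charpoly = ∑ A ∈ univ.powerset.filter (fun A => IsInForest W A),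
      (-1) ^ #A * C (forestWeight W A) * X ^ (n - #A) := by
  rw [charpoly_lap_eq_sum, ← sum_filter_of_ne fun c _ => not_imp_comm.mp
    (prod_lapCoeff_mul_det_eq_zero hW)]
  refine sum_nbij arcSet (fun c hc => ?_) arcSet_injective.injOn (fun A hA => ?_) fun c hc => ?_
  · simpa using (mem_filter.mp hc).2
  · obtain ⟨c, rfl⟩ := exists_arcSet_eq (mem_filter.mp hA).2.2.1
    exact ⟨c, by simpa using (mem_filter.mp hA).2, rfl⟩
  · rw [prod_lapCoeff, det_one_sub_ofPartialFun_of_acyclic c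
      (isInForest_arcSet_iff.mp (mem_filter.mp hc).2).1, C_1, mul_one]

open scoped Classical in
theorem coeff_charpoly_lap (W : Matrix (Fin n) (Fin n) ℝ) (hW : ∀ i j, 0 ≤ W i j) {m : ℕ}
    (hm : m ≤ n) : (lap W).charpoly.coeff m = (-1) ^ (n - m) * sigmaW W (n - m) := by
  have hterm : ∀ A ∈ univ.powerset.filter (fun A => IsInForest W A),
      ((-1) ^ #A * C (forestWeight W A) * X ^ (n - #A)).coeff m =
        if #A = n - m then (-1) ^ (n - m) * forestWeight W A else 0 := fun A hA => by
    have hcard : #A ≤ n := by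
      simpa using card_le_of_card_filter_fst_le_one (mem_filter.mp hA).2.2.1
    rw [← C_1, ← C_neg, ← C_pow, ← C_mul, coeff_C_mul_X_pow]
    by_cases h : #A = n - m
    · rw [if_pos (by omega), if_pos h, h]
    · rw [if_neg (by omega), if_neg h]
  rw [charpoly_lap_eq_sum_isInForest W hW, finsetSum_coeff, sum_congr rfl hterm, ← sum_filter,
    filter_filter, sigmaW, mul_sum]

end Laplacian

section ForestDim

variable {n : ℕ}

open scoped Classical in
theorem maxForestCard_le (W : Matrix (Fin n) (Fin n) ℝ) : maxForestCard W ≤ n :=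
  Finset.sup_le fun A hA => by
    simpa using card_le_of_card_filter_fst_le_one (mem_filter.mp hA).2.2.1

theorem isInForest_empty (W : Matrix (Fin n) (Fin n) ℝ) : IsInForest W ∅ := by
  refine ⟨by simp, by simp, fun i h => ?_⟩
  obtain ⟨_, hb, -⟩ := TransGen.head'_iff.mp h
  simp at hb

open scoped Classical in
theorem sigmaW_maxForestCard_pos (W : Matrix (Fin n) (Fin n) ℝ) :
    0 < sigmaW W (maxForestCard W) := by
  obtain ⟨A, hA, hmax⟩ := exists_mem_eq_sup (univ.powerset.filter (fun A => IsInForest W A))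
    ⟨∅, mem_filter.mpr ⟨empty_mem_powerset _, isInForest_empty W⟩⟩ card
  exact sum_pos (fun B hB => prod_pos fun e he => ((mem_filter.mp hB).2.1.1 e he).2)
    ⟨A, mem_filter.mpr ⟨(mem_filter.mp hA).1, (mem_filter.mp hA).2, hmax.symm⟩⟩

open scoped Classical in
theorem sigmaW_eq_zero_of_maxForestCard_lt (W : Matrix (Fin n) (Fin n) ℝ) {k : ℕ}
    (hk : maxForestCard W < k) : sigmaW W k = 0 := by
  refine sum_eq_zero fun A hA => absurd ?_ hk.not_ge
  rw [mem_filter] at hA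
  exact hA.2.2 ▸ le_sup (f := card) (mem_filter.mpr ⟨hA.1, hA.2.1⟩)

end ForestDim

theorem Polynomial.natTrailingDegree_eq_of_coeff_ne_zero {R : Type*} [Semiring R] {p : R[X]}
    {d : ℕ} (hd : p.coeff d ≠ 0) (hlt : ∀ m < d, p.coeff m = 0) : p.natTrailingDegree = d :=
  le_antisymm (natTrailingDegree_le_of_ne_zero hd)
    (le_natTrailingDegree (by rintro rfl; simp at hd) hlt)

theorem multiplicity_zero_eigenvalue_eq_forestDim_general {n : ℕ}
    (W : Matrix (Fin n) (Fin n) ℝ)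
    (hW : ∀ i j, 0 ≤ W i j) :
    (lap W).charpoly.rootMultiplicity 0 = forestDim W := by
  have hmax := maxForestCard_le W
  have hdim : forestDim W = n - maxForestCard W := rfl
  rw [rootMultiplicity_eq_natTrailingDegree']
  refine natTrailingDegree_eq_of_coeff_ne_zero ?_ fun m hm => ?_
  · rw [coeff_charpoly_lap W hW (by omega), show n - forestDim W = maxForestCard W by omega]
    exact mul_ne_zero (pow_ne_zero _ (by norm_num)) (sigmaW_maxForestCard_pos W).ne'
  · rw [coeff_charpoly_lap W hW (by omega), sigmaW_eq_zero_of_maxForestCard_lt W (by omega),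
      mul_zero]

/-- The multiplicity of `0` as an eigenvalue of the Laplacian matrix `L` equals
the in-forest dimension `d` of the digraph. -/
theorem multiplicity_zero_eigenvalue_eq_forestDim {n : ℕ}
    (W : Matrix (Fin n) (Fin n) ℝ)
    (hn : 1 < n) (hW : ∀ i j, 0 ≤ W i j) (hdiag : ∀ i, W i i = 0) :
    (lap W).charpoly.rootMultiplicity 0 = forestDim W :=
  multiplicity_zero_eigenvalue_eq_forestDim_general W hW
end

section
/- The in-forest matrices obey the Faddeev-type recursion Q_{k+1} = (−L)Q_k + σ_{k+1}I with σ_{k+1} = tr(LQ_k)/(k+1), starting from Q_0 = I. -/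
open Matrix Finset Polynomial

/-!
Write `T_j(F)` for the tree of `F` rooted at `j`. Expanding `L = D - W`, the entry
`(L Q_k) i j` is a sum over arcs `(i, l)` and `k`-arc in-forests `F` of
`W i l · w(F) · ([i ∈ T_j(F)] - [l ∈ T_j(F)])`, and pairs in which `l` reaches `i` contribute
nothing. If `i` is a root of `F`, adding the arc `(i, l)` is a bijection onto the
`(k+1)`-arc in-forests in which `i` is not a root, and these terms add up to
`(σ_{k+1} I - Q_{k+1}) i j`. If `i` is not a root, with outgoing arc `(i, x)`, then detaching
that arc leaves a summand that is antisymmetric in `l` and `x`, so these terms cancel.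
Taking traces, a `k`-arc in-forest has `n - k` roots, so `tr Q_{k+1} = (n - k - 1) σ_{k+1}`
and `tr (L Q_k) = (k + 1) σ_{k+1}`.
-/

namespace Relation

variable {α : Type*} {r s : α → α → Prop} {i x y : α}

theorem TransGen.mono_of_not_reflTransGen (hrs : ∀ a b, r a b → a ≠ i → s a b)
    (h : TransGen r x y) (hx : ¬ReflTransGen r x i) : TransGen s x y := by
  induction h using TransGen.head_induction_on with
  | single hab => exact .single (hrs _ _ hab fun h => hx (h ▸ .refl))
  | head hac _ ih =>
    exact .head (hrs _ _ hac fun h => hx (h ▸ .refl)) (ih fun h => hx (.head hac h))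

theorem ReflTransGen.mono_of_not_reflTransGen (hrs : ∀ a b, r a b → a ≠ i → s a b)
    (h : ReflTransGen r x y) (hx : ¬ReflTransGen r x i) : ReflTransGen s x y := by
  rcases reflTransGen_iff_eq_or_transGen.mp h with rfl | h
  · rfl
  · exact (h.mono_of_not_reflTransGen hrs hx).to_reflTransGen

theorem ReflTransGen.mono_of_ne_target (hrs : ∀ a b, r a b → a ≠ y → s a b)
    (h : ReflTransGen r x y) : ReflTransGen s x y := by
  induction h using ReflTransGen.head_induction_on with
  | refl => rfl
  | @head a c hac _ ih =>
    by_cases hay : a = y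
    · rw [hay]
    · exact .head (hrs _ _ hac hay) ih

theorem TransGen.of_reflTransGen_of_rightUnique (hr : Relator.RightUnique r)
    (hx : TransGen r x x) (hxy : ReflTransGen r x y) : TransGen r y y := by
  induction hxy using ReflTransGen.head_induction_on with
  | refl => exact hx
  | @head a c hac _ ih =>
    obtain ⟨w, haw, hwa⟩ := TransGen.head'_iff.mp hx
    exact ih (.tail' (hr haw hac ▸ hwa) hac)

end Relation

theorem Finset.sum_sum_eq_zero_of_antisymm {ι M : Type*} [Fintype ι] [AddCommGroup M]
    [LinearOrder M] [IsOrderedAddMonoid M] (f : ι → ι → M) (hf : ∀ a b, f b a = -f a b) :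
    ∑ a, ∑ b, f a b = 0 :=
  eq_zero_of_neg_eq <| by simp_rw [← sum_neg_distrib, ← hf]; exact sum_comm

section Arcs

variable {α : Type*} {A : Finset (α × α)} {i j l x y z : α}

abbrev Reach (A : Finset (α × α)) : α → α → Prop :=
  Relation.ReflTransGen fun a b => (a, b) ∈ A

def IsSink (A : Finset (α × α)) (j : α) : Prop :=
  ∀ e ∈ A, e.1 ≠ j

theorem Reach.mono {B : Finset (α × α)} (hAB : A ⊆ B) (h : Reach A x y) : Reach B x y :=
  Relation.ReflTransGen.mono (fun _ _ h => hAB h) _ _ h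

theorem IsSink.eq_of_reach (hx : IsSink A x) (h : Reach A x y) : x = y := by
  rcases Relation.ReflTransGen.cases_head h with h | ⟨c, hc, -⟩
  · exact h
  · exact absurd rfl (hx _ hc)

variable [DecidableEq α]

theorem isSink_filter_fst_ne (A : Finset (α × α)) (i : α) : IsSink (A.filter (·.1 ≠ i)) i :=
  fun _ he => (mem_filter.mp he).2

theorem mem_of_mem_insert_of_fst_ne {a b : α} (h : (a, b) ∈ insert (i, l) A) (ha : a ≠ i) :
    (a, b) ∈ A :=
  mem_of_mem_insert_of_ne h fun h => ha (Prod.ext_iff.mp h).1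

theorem reach_insert_self_iff : Reach (insert (i, l) A) x i ↔ Reach A x i :=
  ⟨.mono_of_ne_target fun _ _ => mem_of_mem_insert_of_fst_ne,
    .mono (subset_insert _ _)⟩

theorem reach_insert_iff_of_not_reach (hz : ¬Reach A z i) :
    Reach (insert (i, l) A) z j ↔ Reach A z j :=
  ⟨fun h => h.mono_of_not_reflTransGen (fun _ _ => mem_of_mem_insert_of_fst_ne)
      (hz ∘ reach_insert_self_iff.mp),
    .mono (subset_insert _ _)⟩

theorem rightUnique_insert (hA : Relator.RightUnique fun a b => (a, b) ∈ A) (hi : IsSink A i) :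
    Relator.RightUnique fun a b => (a, b) ∈ insert (i, l) A := by
  intro a b c hb hc
  by_cases ha : a = i
  · subst ha
    have key : ∀ {d}, (a, d) ∈ insert (a, l) A → d = l := fun hd =>
      (Prod.ext_iff.mp ((mem_insert.mp hd).resolve_right fun hd => hi _ hd rfl)).2
    exact (key hb).trans (key hc).symm
  · exact hA (mem_of_mem_insert_of_fst_ne hb ha) (mem_of_mem_insert_of_fst_ne hc ha)

theorem filter_insert_of_isSink (hi : IsSink A i) : (insert (i, l) A).filter (·.1 ≠ i) = A := by
  rw [filter_insert, if_neg (not_not.mpr rfl), filter_true_of_mem fun e he => hi e he]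

theorem insert_eq_insert_iff_of_isSink {F : Finset (α × α)} {l' : α} (hA : IsSink A i)
    (hF : IsSink F i) : insert (i, l) A = insert (i, l') F ↔ l = l' ∧ A = F := by
  refine ⟨fun h => ⟨?_, ?_⟩, fun ⟨hl, hAF⟩ => hl ▸ hAF ▸ rfl⟩
  · have : (i, l) ∈ insert (i, l') F := h ▸ mem_insert_self _ _
    exact (Prod.ext_iff.mp ((mem_insert.mp this).resolve_right fun h => hF _ h rfl)).2
  · rw [← filter_insert_of_isSink hA (l := l), h, filter_insert_of_isSink hF]

theorem insert_filter_of_mem (hA : Relator.RightUnique fun a b => (a, b) ∈ A) (h : (i, l) ∈ A) :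
    insert (i, l) (A.filter (·.1 ≠ i)) = A := by
  ext ⟨a, b⟩
  simp only [mem_insert, mem_filter, Prod.mk.injEq]
  constructor
  · rintro (⟨rfl, rfl⟩ | ⟨he, -⟩) <;> assumption
  · intro he
    by_cases ha : a = i
    · subst ha; exact .inl ⟨rfl, hA he h⟩
    · exact .inr ⟨he, ha⟩

open scoped Classical in
theorem card_isSink_add_card [Fintype α] (hA : Relator.RightUnique fun a b => (a, b) ∈ A) :
    #{j | IsSink A j} + #A = Fintype.card α := by
  have hsinks : ({j | IsSink A j} : Finset α) = univ \ A.image Prod.fst := by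
    ext j
    simp only [mem_filter, mem_univ, true_and, mem_sdiff, mem_image, not_exists, not_and]
    exact ⟨fun h e he hej => h e he hej, fun h e he hej => h e he hej⟩
  have hinj : Set.InjOn Prod.fst (A : Set (α × α)) := fun e he f hf h =>
    Prod.ext h (hA (a := e.1) he (h ▸ hf))
  rw [hsinks, card_sdiff_of_subset (subset_univ _), card_image_of_injOn hinj, card_univ,
    Nat.sub_add_cancel]
  exact (card_image_of_injOn hinj).symm.le.trans (card_le_univ _)

end Arcs

section Forests

variable {n : ℕ} {W : Matrix (Fin n) (Fin n) ℝ} {A F : Finset (Fin n × Fin n)}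
  {i j l z : Fin n}

theorem inTreeRootedAt_self_iff : InTreeRootedAt A j j ↔ IsSink A j :=
  ⟨And.right, fun h => ⟨.refl, h⟩⟩

theorem inTreeRootedAt_iff_eq_of_isSink (hi : IsSink A i) : InTreeRootedAt A i j ↔ i = j :=
  ⟨fun h => hi.eq_of_reach h.1, fun h => h ▸ ⟨.refl, hi⟩⟩

theorem inTreeRootedAt_iff_of_reach (hA : Relator.RightUnique fun a b => (a, b) ∈ A)
    (h : Reach A l i) : InTreeRootedAt A l j ↔ InTreeRootedAt A i j := by
  refine ⟨fun ⟨hlj, hj⟩ => ⟨?_, hj⟩, fun ⟨hij, hj⟩ => ⟨h.trans hij, hj⟩⟩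
  rcases Relation.ReflTransGen.total_of_right_unique hA h hlj with hij | hji
  · exact hij
  · exact (IsSink.eq_of_reach hj hji) ▸ .refl

theorem inTreeRootedAt_insert_iff_of_not_reach (hz : ¬Reach A z i) :
    InTreeRootedAt (insert (i, l) A) z j ↔ InTreeRootedAt A z j := by
  by_cases hij : i = j
  · subst hij
    exact iff_of_false (fun h => hz (reach_insert_self_iff.mp h.1)) fun h => hz h.1
  · have hsink : IsSink (insert (i, l) A) j ↔ IsSink A j := by
      simp only [IsSink, forall_mem_insert]
      exact and_iff_right hij
    exact and_congr (reach_insert_iff_of_not_reach hz) hsink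

theorem inTreeRootedAt_insert_self_iff (hA : Relator.RightUnique fun a b => (a, b) ∈ A)
    (hi : IsSink A i) (hl : ¬Reach A l i) :
    InTreeRootedAt (insert (i, l) A) i j ↔ InTreeRootedAt A l j :=
  (inTreeRootedAt_iff_of_reach (rightUnique_insert hA hi)
      (.single (mem_insert_self _ _))).trans
    (inTreeRootedAt_insert_iff_of_not_reach hl)

theorem IsInForest.rightUnique (hA : IsInForest W A) :
    Relator.RightUnique fun a b => (a, b) ∈ A := fun a b c hb hc =>
  (Prod.ext_iff.mp (card_le_one.mp (hA.2.1 a) (a, b) (by simp [hb]) (a, c) (by simp [hc]))).2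

theorem IsInForest.subset (hA : IsInForest W A) (hFA : F ⊆ A) : IsInForest W F :=
  ⟨fun e he => hA.1 e (hFA he),
    fun a => (card_le_card (filter_subset_filter _ hFA)).trans (hA.2.1 a),
    fun a h => hA.2.2 a (Relation.TransGen.mono (fun _ _ h => hFA h) _ _ h)⟩

theorem isInForest_empty_s7 : IsInForest W ∅ :=
  ⟨by simp, by simp, fun a h => by simpa using Relation.TransGen.head'_iff.mp h⟩

theorem IsInForest.not_reach_of_mem (hA : IsInForest W A) (h : (i, l) ∈ A) : ¬Reach A l i :=
  fun hli => hA.2.2 i (.head' h hli)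

def IsAttachable (W : Matrix (Fin n) (Fin n) ℝ) (F : Finset (Fin n × Fin n)) (i l : Fin n) :
    Prop :=
  IsInForest W F ∧ IsSink F i ∧ ¬Reach F l i ∧ 0 < W i l

theorem IsAttachable.isInForest_insert (h : IsAttachable W F i l) :
    IsInForest W (insert (i, l) F) := by
  obtain ⟨hF, hi, hl, hW⟩ := h
  have hG := rightUnique_insert (l := l) hF.rightUnique hi
  refine ⟨?_, fun a => card_le_one.mpr ?_, fun x hx => ?_⟩
  · simp only [forall_mem_insert]
    exact ⟨⟨fun h => hl (h ▸ .refl), hW⟩, hF.1⟩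
  · rintro ⟨a, b⟩ hb ⟨a', c⟩ hc
    simp only [mem_filter] at hb hc
    obtain ⟨hb, rfl⟩ := hb
    obtain ⟨hc, rfl⟩ := hc
    rw [hG hb hc]
  · -- a cycle reaching `i` passes through the new arc `(i, l)`; one avoiding `i` lies in `F`
    by_cases hxi : Reach (insert (i, l) F) x i
    · obtain ⟨w, hiw, hwi⟩ :=
        Relation.TransGen.head'_iff.mp (hx.of_reflTransGen_of_rightUnique hG hxi)
      rw [hG hiw (mem_insert_self _ _)] at hwi
      exact hl (reach_insert_self_iff.mp hwi)
    · exact hF.2.2 x (hx.mono_of_not_reflTransGen (fun _ _ => mem_of_mem_insert_of_fst_ne) hxi)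

theorem IsInForest.isAttachable_filter (hA : IsInForest W A) (h : (i, l) ∈ A) :
    IsAttachable W (A.filter (·.1 ≠ i)) i l :=
  ⟨hA.subset (filter_subset _ _), isSink_filter_fst_ne A i,
    fun hl => hA.not_reach_of_mem h (hl.mono (filter_subset _ _)), (hA.1 _ h).2⟩

end Forests

section ForestSums

open scoped Classical

variable {n : ℕ} {W : Matrix (Fin n) (Fin n) ℝ} {F : Finset (Fin n × Fin n)} {i j l x : Fin n}

noncomputable def inForests (W : Matrix (Fin n) (Fin n) ℝ) (k : ℕ) :
    Finset (Finset (Fin n × Fin n)) :=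
  {A | IsInForest W A ∧ #A = k}

theorem sigmaW_eq_sum (W : Matrix (Fin n) (Fin n) ℝ) (k : ℕ) :
    sigmaW W k = ∑ A ∈ inForests W k, forestWeight W A := by
  rw [sigmaW, powerset_univ, inForests]

noncomputable def treeIndicator (A : Finset (Fin n × Fin n)) (z j : Fin n) : ℝ :=
  if InTreeRootedAt A z j then 1 else 0

theorem forestMatrix_apply_eq_sum (W : Matrix (Fin n) (Fin n) ℝ) (k : ℕ) (z j : Fin n) :
    forestMatrix W k z j = ∑ A ∈ inForests W k, forestWeight W A * treeIndicator A z j := by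
  simp only [forestMatrix, of_apply, powerset_univ, inForests, treeIndicator, mul_ite, mul_one,
    mul_zero, ← sum_filter, filter_filter, and_assoc]

theorem treeIndicator_of_isSink {A : Finset (Fin n × Fin n)} (hi : IsSink A i) :
    treeIndicator A i j = (1 : Matrix (Fin n) (Fin n) ℝ) i j := by
  simp only [treeIndicator, inTreeRootedAt_iff_eq_of_isSink hi, one_apply]

theorem sum_inForests_not_isSink {M : Type*} [AddCommMonoid M] (W : Matrix (Fin n) (Fin n) ℝ)
    (i : Fin n) (k : ℕ) (f : Finset (Fin n × Fin n) → M) :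
    ∑ A ∈ inForests W k with ¬IsSink A i, f A =
      ∑ l, ∑ F with IsAttachable W F i l ∧ #F + 1 = k, f (insert (i, l) F) := by
  simp only [sum_filter (s := univ), ← Fintype.sum_prod_type']
  rw [← sum_filter]
  symm
  refine sum_nbij (fun p => insert (i, p.1) p.2) ?_ ?_ ?_ fun _ _ => rfl
  · rintro ⟨l, F⟩ hp
    simp only [inForests, mem_filter, mem_univ, true_and] at hp ⊢
    obtain ⟨hatt, rfl⟩ := hp
    exact ⟨⟨hatt.isInForest_insert, card_insert_of_notMem fun h => hatt.2.1 _ h rfl⟩,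
      fun h => h _ (mem_insert_self _ _) rfl⟩
  · rintro ⟨l, F⟩ hp ⟨l', F'⟩ hp' h
    simp only [coe_filter, mem_univ, true_and, Set.mem_ofPred_eq] at hp hp'
    exact Prod.ext_iff.mpr ((insert_eq_insert_iff_of_isSink hp.1.2.1 hp'.1.2.1).mp h)
  · intro A hA
    simp only [inForests, coe_filter, mem_filter, mem_univ, true_and, Set.mem_ofPred_eq] at hA
    obtain ⟨⟨hA, rfl⟩, hi⟩ := hA
    obtain ⟨⟨i', l⟩, h, rfl⟩ : ∃ e ∈ A, e.1 = i := by simpa [IsSink] using hi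
    have hins := insert_filter_of_mem hA.rightUnique h
    refine ⟨(l, A.filter (·.1 ≠ i')), ?_, hins⟩
    rw [mem_coe, mem_filter]
    refine ⟨mem_univ _, hA.isAttachable_filter h, ?_⟩
    conv_rhs => rw [← hins]
    exact (card_insert_of_notMem fun h => isSink_filter_fst_ne A i' _ h rfl).symm

noncomputable def lapTerm (W : Matrix (Fin n) (Fin n) ℝ) (i j l : Fin n)
    (F : Finset (Fin n × Fin n)) : ℝ :=
  W i l * forestWeight W F * (treeIndicator F i j - treeIndicator F l j)

theorem lap_mul_apply (W M : Matrix (Fin n) (Fin n) ℝ) (i j : Fin n) :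
    (lap W * M) i j = ∑ l, W i l * (M i j - M l j) := by
  rw [lap, Matrix.sub_mul, Matrix.sub_apply, diagonal_mul, mul_apply, sum_mul, ← sum_sub_distrib]
  simp only [mul_sub]

theorem lap_mul_forestMatrix_apply_eq_sum (W : Matrix (Fin n) (Fin n) ℝ) (k : ℕ) (i j : Fin n) :
    (lap W * forestMatrix W k) i j = ∑ l, ∑ F ∈ inForests W k, lapTerm W i j l F := by
  simp only [lap_mul_apply, forestMatrix_apply_eq_sum, ← sum_sub_distrib, mul_sum, lapTerm]
  refine sum_congr rfl fun l _ => sum_congr rfl fun F _ => by ring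

theorem lapTerm_eq_zero_of_reach (hF : IsInForest W F) (h : Reach F l i) :
    lapTerm W i j l F = 0 := by
  rw [lapTerm, treeIndicator, treeIndicator, inTreeRootedAt_iff_of_reach hF.rightUnique h,
    sub_self, mul_zero]

theorem forestWeight_insert_of_isSink (hi : IsSink F i) :
    forestWeight W (insert (i, l) F) = W i l * forestWeight W F :=
  prod_insert fun h => hi _ h rfl

theorem IsAttachable.forestWeight_insert_mul_sub_treeIndicator (h : IsAttachable W F i l) :
    forestWeight W (insert (i, l) F) *
        ((1 : Matrix (Fin n) (Fin n) ℝ) i j - treeIndicator (insert (i, l) F) i j) =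
      lapTerm W i j l F := by
  rw [forestWeight_insert_of_isSink h.2.1, lapTerm, treeIndicator_of_isSink h.2.1, treeIndicator,
    inTreeRootedAt_insert_self_iff h.1.rightUnique h.2.1 h.2.2.1, ← treeIndicator, mul_assoc]

theorem IsAttachable.lapTerm_insert (hx : IsAttachable W F i x) :
    (if ¬Reach (insert (i, x) F) l i ∧ 0 < W i l then lapTerm W i j l (insert (i, x) F) else 0) =
      if IsAttachable W F i l then
        W i l * W i x * forestWeight W F * (treeIndicator F x j - treeIndicator F l j)
      else 0 := by
  have hcond : (¬Reach (insert (i, x) F) l i ∧ 0 < W i l) ↔ IsAttachable W F i l := by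
    rw [reach_insert_self_iff]
    exact ⟨fun h => ⟨hx.1, hx.2.1, h⟩, fun h => h.2.2⟩
  by_cases hl : IsAttachable W F i l
  · rw [if_pos (hcond.mpr hl), if_pos hl, lapTerm, forestWeight_insert_of_isSink hx.2.1,
      treeIndicator, treeIndicator,
      inTreeRootedAt_insert_self_iff hx.1.rightUnique hx.2.1 hx.2.2.1,
      inTreeRootedAt_insert_iff_of_not_reach hl.2.2.1, ← treeIndicator, ← treeIndicator]
    ring
  · rw [if_neg (mt hcond.mp hl), if_neg hl]

theorem sigmaW_smul_one_sub_forestMatrix_succ_apply_eq_sum (W : Matrix (Fin n) (Fin n) ℝ)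
    (k : ℕ) (i j : Fin n) :
    (sigmaW W (k + 1) • (1 : Matrix (Fin n) (Fin n) ℝ) - forestMatrix W (k + 1)) i j =
      ∑ l, ∑ F with IsAttachable W F i l ∧ #F = k, lapTerm W i j l F := by
  have hsink : ∀ A ∈ inForests W (k + 1),
      forestWeight W A * ((1 : Matrix (Fin n) (Fin n) ℝ) i j - treeIndicator A i j) ≠ 0 →
        ¬IsSink A i :=
    fun A _ h hi => h (by rw [treeIndicator_of_isSink hi, sub_self, mul_zero])
  calc _ = ∑ A ∈ inForests W (k + 1),
        forestWeight W A * ((1 : Matrix (Fin n) (Fin n) ℝ) i j - treeIndicator A i j) := by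
        rw [Matrix.sub_apply, Matrix.smul_apply, smul_eq_mul, sigmaW_eq_sum,
          forestMatrix_apply_eq_sum, sum_mul, ← sum_sub_distrib]
        simp only [mul_sub]
    _ = ∑ A ∈ inForests W (k + 1) with ¬IsSink A i,
        forestWeight W A * ((1 : Matrix (Fin n) (Fin n) ℝ) i j - treeIndicator A i j) :=
      (sum_filter_of_ne hsink).symm
    _ = _ := by
        rw [sum_inForests_not_isSink]
        simp only [Nat.add_right_cancel_iff]
        exact sum_congr rfl fun l _ => sum_congr rfl fun F hF =>
          (mem_filter.mp hF).2.1.forestWeight_insert_mul_sub_treeIndicator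

theorem sum_sum_lapTerm_not_isSink_eq_zero (W : Matrix (Fin n) (Fin n) ℝ) (k : ℕ)
    (i j : Fin n) :
    ∑ l, ∑ F ∈ inForests W k with ¬IsSink F i,
      (if ¬Reach F l i ∧ 0 < W i l then lapTerm W i j l F else 0) = 0 := by
  calc _ = ∑ l, ∑ x, ∑ F with IsAttachable W F i x ∧ #F + 1 = k,
        if IsAttachable W F i l then
          W i l * W i x * forestWeight W F * (treeIndicator F x j - treeIndicator F l j)
        else 0 := by
        refine sum_congr rfl fun l _ => ?_
        rw [sum_inForests_not_isSink]
        exact sum_congr rfl fun x _ => sum_congr rfl fun F hF =>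
          (mem_filter.mp hF).2.1.lapTerm_insert
    _ = 0 := by
        refine sum_sum_eq_zero_of_antisymm _ fun l x => ?_
        simp only [sum_filter, ← sum_neg_distrib]
        refine sum_congr rfl fun F _ => ?_
        by_cases hl : IsAttachable W F i l <;> by_cases hx : IsAttachable W F i x <;>
          simp only [hl, hx, true_and, false_and, if_true, if_false, ite_self, neg_zero]
        split_ifs <;> ring

theorem lap_mul_forestMatrix_apply_eq_sum_isAttachable (hW : ∀ i j, 0 ≤ W i j) (k : ℕ)
    (i j : Fin n) :
    (lap W * forestMatrix W k) i j =
      ∑ l, ∑ F with IsAttachable W F i l ∧ #F = k, lapTerm W i j l F := by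
  have hsplit : ∀ l, ∑ F ∈ inForests W k, lapTerm W i j l F =
      ∑ F with IsAttachable W F i l ∧ #F = k, lapTerm W i j l F +
        ∑ F ∈ inForests W k with ¬IsSink F i,
          (if ¬Reach F l i ∧ 0 < W i l then lapTerm W i j l F else 0) := by
    intro l
    have hne : ∀ F ∈ inForests W k,
        lapTerm W i j l F ≠ 0 → ¬Reach F l i ∧ 0 < W i l := by
      intro F hF h
      have hF := (mem_filter.mp hF).2.1
      refine ⟨fun hr => h (lapTerm_eq_zero_of_reach hF hr), (hW i l).lt_of_ne fun h0 => h ?_⟩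
      rw [lapTerm, ← h0, zero_mul, zero_mul]
    rw [← sum_filter_of_ne hne, ← sum_filter_add_sum_filter_not _ (IsSink · i), ← sum_filter,
      filter_comm (¬IsSink · i)]
    congr 2
    ext F
    simp only [inForests, mem_filter, mem_univ, true_and]
    unfold IsAttachable
    tauto
  rw [lap_mul_forestMatrix_apply_eq_sum]
  simp only [hsplit, sum_add_distrib, sum_sum_lapTerm_not_isSink_eq_zero, add_zero]

theorem sigmaW_smul_one_sub_forestMatrix_succ (hW : ∀ i j, 0 ≤ W i j) (k : ℕ) :
    sigmaW W (k + 1) • 1 - forestMatrix W (k + 1) = lap W * forestMatrix W k := by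
  ext i j
  rw [sigmaW_smul_one_sub_forestMatrix_succ_apply_eq_sum,
    lap_mul_forestMatrix_apply_eq_sum_isAttachable hW]

theorem trace_forestMatrix (W : Matrix (Fin n) (Fin n) ℝ) (k : ℕ) :
    (forestMatrix W k).trace = (n - k : ℝ) * sigmaW W k := by
  simp only [trace, Matrix.diag, forestMatrix_apply_eq_sum]
  rw [sum_comm, sigmaW_eq_sum, mul_sum]
  refine sum_congr rfl fun A hA => ?_
  obtain ⟨hF, rfl⟩ := (mem_filter.mp hA).2
  have hcard := card_isSink_add_card hF.rightUnique
  rw [Fintype.card_fin] at hcard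
  have hsinks : (#{j | IsSink A j} : ℝ) = n - #A := by
    rw [eq_sub_iff_add_eq]
    exact_mod_cast hcard
  simp only [← mul_sum, treeIndicator, inTreeRootedAt_self_iff, sum_boole, hsinks, mul_comm]

theorem forestMatrix_zero (W : Matrix (Fin n) (Fin n) ℝ) : forestMatrix W 0 = 1 := by
  ext i j
  have hempty : inForests W 0 = {∅} := by
    ext A
    simp only [inForests, mem_filter, mem_univ, true_and, card_eq_zero, mem_singleton]
    exact ⟨And.right, fun h => ⟨h ▸ isInForest_empty_s7, h⟩⟩
  rw [forestMatrix_apply_eq_sum, hempty, sum_singleton, forestWeight, prod_empty, one_mul,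
    treeIndicator_of_isSink fun _ h => absurd h (notMem_empty _)]

end ForestSums

theorem forestMatrix_recursion_general {n : ℕ} (W : Matrix (Fin n) (Fin n) ℝ)
    (hW : ∀ i j, 0 ≤ W i j) :
    forestMatrix W 0 = 1 ∧
    ∀ k : ℕ,
      forestMatrix W (k + 1) =
        (-(lap W)) * forestMatrix W k + sigmaW W (k + 1) • 1 ∧
      sigmaW W (k + 1) = (lap W * forestMatrix W k).trace / (k + 1) := by
  refine ⟨forestMatrix_zero W, fun k => ?_⟩
  have hrec := sigmaW_smul_one_sub_forestMatrix_succ hW k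
  refine ⟨by rw [Matrix.neg_mul, ← hrec]; abel, ?_⟩
  rw [← hrec, trace_sub, trace_smul, trace_one, trace_forestMatrix, Fintype.card_fin, smul_eq_mul]
  field_simp
  push_cast
  ring

/-- Faddeev-type recursion for the forest matrices:
`Q_{k+1} = (−L)Q_k + σ_{k+1} I` and `σ_{k+1} = tr(L Q_k)/(k+1)`,
starting from `Q_0 = I`. -/
theorem forestMatrix_recursion {n : ℕ} (W : Matrix (Fin n) (Fin n) ℝ)
    (hn : 1 < n) (hW : ∀ i j, 0 ≤ W i j) (hdiag : ∀ i, W i i = 0) :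
    forestMatrix W 0 = 1 ∧
    ∀ k : ℕ,
      forestMatrix W (k + 1) =
        (-(lap W)) * forestMatrix W k + sigmaW W (k + 1) • 1 ∧
      sigmaW W (k + 1) = (lap W * forestMatrix W k).trace / (k + 1) :=
  forestMatrix_recursion_general W hW
end
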